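/- arXiv:2405.09088 — 4 statements merged into one kernel-verified Lean document; each statement's English description precedes it below -/
import Mathlib

section
/- If γ_M(X) ≥ 0 for every X ⊆ E(M), then Σ_{Z ∈ Z(M), Z ⊊ E(M)} γ_M(Z) ≤ |E(M)|, where the sum ranges over all cyclic flats of M properly contained in E(M). -/
open Set Matroid
open scoped Classical

namespace Paper

variable {α : Type*}

/-- A circuit of a matroid: a minimal dependent set. -/
def Circuit (M : Matroid α) (C : Set α) : Prop :=
  M.Dep C ∧ ∀ D ⊂ C, M.Indep D

/-- A coloop: an element of the ground set lying in no circuit. -/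
def Coloop (M : Matroid α) (x : α) : Prop :=
  x ∈ M.E ∧ ∀ C, Circuit M C → x ∉ C

/-- The set of coloops of a matroid. -/
def coloops (M : Matroid α) : Set α := {x | Coloop M x}

/-- A cyclic set: a subset of the ground set each of whose elements lies in a
circuit contained in the set (equivalently, the restriction has no coloops). -/
def Cyclic (M : Matroid α) (X : Set α) : Prop :=
  X ⊆ M.E ∧ ∀ x ∈ X, ∃ C, Circuit M C ∧ C ⊆ X ∧ x ∈ C

/-- A cyclic flat: a cyclic set that is also a flat. -/
def CyclicFlat (M : Matroid α) (X : Set α) : Prop :=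
  Cyclic M X ∧ M.IsFlat X

/-- The rank of a set: the largest cardinality of an independent subset. -/
noncomputable def rk (M : Matroid α) (X : Set α) : ℕ :=
  sSup (Set.ncard '' {I | M.Indep I ∧ I ⊆ X})

/-- The nullity of a set: `n(X) = |X| − r(X)`. -/
noncomputable def nullity (M : Matroid α) (X : Set α) : ℤ :=
  (X.ncard : ℤ) - rk M X

/-- Deletion of a single element: `M \ e`. -/
noncomputable def deleteElem (M : Matroid α) (e : α) : Matroid α :=
  M ↾ (M.E \ {e})

theorem nullity_le_ncard (M : Matroid α) (X : Set α) : nullity M X ≤ X.ncard :=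
  Int.sub_le_self _ (Int.natCast_nonneg _)

variable [Fintype α] [DecidableEq α]

/-- The `γ` function: `γ_M(X) = n(X) − Σ_{Z ∈ Z(M), Z ⊊ X} γ_M(Z)`. -/
noncomputable def gamma (M : Matroid α) (X : Finset α) : ℤ :=
  nullity M ↑X -
    ∑ Z ∈ (Finset.univ.filter (fun Z : Finset α => CyclicFlat M ↑Z ∧ Z ⊂ X)).attach,
      gamma M Z.1
termination_by X.card
decreasing_by
  exact Finset.card_lt_card (Finset.mem_filter.mp Z.2).2.2

theorem sum_gamma_cyclicFlat_ssubset (M : Matroid α) (X : Finset α) :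
    ∑ Z ∈ Finset.univ.filter (fun Z : Finset α => CyclicFlat M ↑Z ∧ Z ⊂ X), gamma M Z
      = nullity M ↑X - gamma M X := by
  rw [gamma, Finset.sum_attach _ (gamma M), sub_sub_cancel]

theorem statement_2 (M : Matroid α)
    (h : ∀ X : Finset α, ↑X ⊆ M.E → 0 ≤ gamma M X) :
    ∑ Z ∈ Finset.univ.filter (fun Z : Finset α => CyclicFlat M ↑Z ∧ ↑Z ⊂ M.E), gamma M Z
      ≤ (M.E.ncard : ℤ) := by
  have hE : ((M.E.toFinset : Finset α) : Set α) = M.E := Set.coe_toFinset _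
  have hfilter : Finset.univ.filter (fun Z : Finset α => CyclicFlat M ↑Z ∧ ↑Z ⊂ M.E)
      = Finset.univ.filter (fun Z : Finset α => CyclicFlat M ↑Z ∧ Z ⊂ M.E.toFinset) := by
    simp only [← Finset.coe_ssubset, hE]
  rw [hfilter, sum_gamma_cyclicFlat_ssubset, hE]
  linarith [nullity_le_ncard M M.E, h M.E.toFinset hE.subset]

end Paper
end

section
/- Let X ⊆ E(M) be a set that is not cyclic, and let L* be the set of coloops of the restriction M|X. If X − L* is not a cyclic flat of M then γ_M(X) = γ_M(X − L*), and if X − L* is a cyclic flat of M then γ_M(X) = 0. -/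
/-!
The coloops `L` of `M|X` lie in every basis of `X`, so `r(X) = r(X − L) + |L|` and
`n(X) = n(X − L)`. A cyclic set avoids the coloops of any restriction containing it, so the
cyclic flats properly contained in `X` are exactly the cyclic flats contained in `X − L`.
Summing `γ` over the latter gives `n(X − L) − γ(X − L)`, plus `γ(X − L)` itself when `X − L`
is a cyclic flat; hence `γ(X) = γ(X − L)` or `γ(X) = 0`.
-/

open Set Matroid
open scoped Classical

namespace Paper

variable {α : Type*}

theorem circuit_iff_isCircuit {M : Matroid α} {C : Set α} : Circuit M C ↔ M.IsCircuit C := by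
  refine ⟨fun ⟨hC, hmin⟩ ↦ isCircuit_iff.2 ⟨hC, fun D hD hDC ↦ ?_⟩,
    fun hC ↦ ⟨hC.dep, fun D ↦ hC.ssubset_indep⟩⟩
  by_contra hne
  exact hD.not_indep (hmin D (ssubset_of_subset_of_ne hDC hne))

theorem coloops_eq_coloops (M : Matroid α) : coloops M = M.coloops := by
  ext x
  change Coloop M x ↔ M.IsColoop x
  refine ⟨fun ⟨hx, hnot⟩ ↦ (isColoop_iff_forall_notMem_isCircuit hx).2 fun C hC ↦ ?_,
    fun hx ↦ ⟨hx.mem_ground, fun C hC ↦ hx.notMem_isCircuit (circuit_iff_isCircuit.1 hC)⟩⟩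
  exact hnot C (circuit_iff_isCircuit.2 hC)

theorem Cyclic.disjoint_coloops_restrict {M : Matroid α} {X Z : Set α} (hZ : Cyclic M Z)
    (hZX : Z ⊆ X) : Disjoint Z (M ↾ X).coloops := by
  refine disjoint_left.2 fun x hxZ hx ↦ ?_
  obtain ⟨C, hC, hCZ, hxC⟩ := hZ.2 x hxZ
  have hCX : (M ↾ X).IsCircuit C :=
    (circuit_iff_isCircuit.1 hC).isCircuit_restrict_of_subset (hCZ.trans hZX)
  exact hCX.not_isColoop_of_mem hxC hx

theorem coloops_restrict_nonempty_of_not_cyclic {M : Matroid α} {X : Set α} (hX : X ⊆ M.E)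
    (hnc : ¬ Cyclic M X) : (M ↾ X).coloops.Nonempty := by
  by_contra hK
  refine hnc ⟨hX, fun x hx ↦ ?_⟩
  obtain ⟨C, hC, hxC⟩ := (M ↾ X).exists_mem_isCircuit_of_not_isColoop hx
    fun h ↦ hK ⟨x, h⟩
  rw [restrict_isCircuit_iff hX] at hC
  exact ⟨C, circuit_iff_isCircuit.2 hC.1, hC.2, hxC⟩

theorem ssubset_iff_subset_sdiff_coloops_restrict {M : Matroid α} {X Z : Set α}
    (hK : (M ↾ X).coloops.Nonempty) (hZ : Cyclic M Z) : Z ⊂ X ↔ Z ⊆ X \ (M ↾ X).coloops := by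
  refine ⟨fun hZX ↦ subset_sdiff.2 ⟨hZX.subset, hZ.disjoint_coloops_restrict hZX.subset⟩,
    fun hZX ↦ hZX.trans_ssubset (sdiff_ssubset_left_iff.2 ?_)⟩
  obtain ⟨x, hx⟩ := hK
  exact ⟨x, (M ↾ X).coloops_subset_ground hx, hx⟩

theorem eRk_union_eq_add_encard_of_subset_coloops {M : Matroid α} {X K : Set α}
    (hXK : Disjoint X K) (hK : K ⊆ M.coloops) : M.eRk (X ∪ K) = M.eRk X + K.encard := by
  refine le_antisymm (M.eRk_union_le_eRk_add_encard X K) ?_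
  obtain ⟨I, hI⟩ := M.exists_isBasis' X
  have hIK : M.Indep (I ∪ K) := (union_indep_iff_indep_of_subset_coloops hK).2 hI.indep
  calc M.eRk X + K.encard = (I ∪ K).encard := by
        rw [← hI.encard_eq_eRk, encard_union_eq (hXK.mono_left hI.subset)]
    _ ≤ M.eRk (X ∪ K) := hIK.encard_le_eRk_of_subset (union_subset_union_left K hI.subset)

theorem eRk_eq_eRk_sdiff_coloops_restrict_add (M : Matroid α) (X : Set α) :
    M.eRk X = M.eRk (X \ (M ↾ X).coloops) + (M ↾ X).coloops.encard := by
  have hKX : (M ↾ X).coloops ⊆ X := (M ↾ X).coloops_subset_ground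
  calc M.eRk X = (M ↾ X).eRk (X \ (M ↾ X).coloops ∪ (M ↾ X).coloops) := by
        rw [sdiff_union_of_subset hKX, restrict_eRk_eq M subset_rfl]
    _ = M.eRk (X \ (M ↾ X).coloops) + (M ↾ X).coloops.encard := by
        rw [eRk_union_eq_add_encard_of_subset_coloops disjoint_sdiff_left subset_rfl,
          restrict_eRk_eq M sdiff_subset]

theorem rk_eq_toNat_eRk {M : Matroid α} {X : Set α} (hX : X.Finite) :
    rk M X = (M.eRk X).toNat := by
  obtain ⟨I, hI⟩ := M.exists_isBasis' X
  have hItop : I.encard ≠ ⊤ := (hX.subset hI.subset).encard_lt_top.ne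
  rw [← hI.encard_eq_eRk, ← ncard_def]
  refine IsGreatest.csSup_eq ⟨⟨I, ⟨hI.indep, hI.subset⟩, rfl⟩, ?_⟩
  rintro _ ⟨J, ⟨hJ, hJX⟩, rfl⟩
  exact ENat.toNat_le_toNat (hI.encard_eq_eRk ▸ hJ.encard_le_eRk_of_subset hJX) hItop

theorem nullity_sdiff_coloops_restrict {M : Matroid α} {X : Set α} (hX : X.Finite) :
    nullity M (X \ (M ↾ X).coloops) = nullity M X := by
  have hKX : (M ↾ X).coloops ⊆ X := (M ↾ X).coloops_subset_ground
  have hfin : ∀ Y ⊆ X, M.eRk Y ≠ ⊤ := fun Y hY ↦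
    ((M.eRk_le_encard Y).trans_lt (hX.subset hY).encard_lt_top).ne
  unfold nullity
  rw [rk_eq_toNat_eRk hX, rk_eq_toNat_eRk hX.sdiff, eRk_eq_eRk_sdiff_coloops_restrict_add M X,
    ENat.toNat_add (hfin _ sdiff_subset) (hX.subset hKX).encard_lt_top.ne, ← ncard_def,
    ← ncard_sdiff_add_ncard_of_subset hKX hX]
  push_cast
  ring

variable [Fintype α] [DecidableEq α]

theorem gamma_eq_nullity_sub_sum (M : Matroid α) (X : Finset α) :
    gamma M X = nullity M ↑X -
      ∑ Z ∈ Finset.univ.filter (fun Z : Finset α => CyclicFlat M ↑Z ∧ Z ⊂ X), gamma M Z := by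
  rw [gamma, Finset.sum_attach]

theorem sum_gamma_cyclicFlat_subset (M : Matroid α) (Y : Finset α) :
    ∑ Z ∈ Finset.univ.filter (fun Z : Finset α => CyclicFlat M ↑Z ∧ Z ⊆ Y), gamma M Z =
      nullity M ↑Y - gamma M Y + if CyclicFlat M ↑Y then gamma M Y else 0 := by
  by_cases hY : CyclicFlat M ↑Y
  · have hins : Finset.univ.filter (fun Z : Finset α => CyclicFlat M ↑Z ∧ Z ⊆ Y) =
        insert Y (Finset.univ.filter (fun Z : Finset α => CyclicFlat M ↑Z ∧ Z ⊂ Y)) := by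
      ext Z
      simp only [Finset.mem_insert, Finset.mem_filter, Finset.mem_univ, true_and,
        subset_iff_ssubset_or_eq]
      constructor
      · rintro ⟨hZ, hZY | rfl⟩
        exacts [Or.inr ⟨hZ, hZY⟩, Or.inl rfl]
      · rintro (rfl | ⟨hZ, hZY⟩)
        exacts [⟨hY, Or.inr rfl⟩, ⟨hZ, Or.inl hZY⟩]
    rw [hins, Finset.sum_insert (by simp), gamma_eq_nullity_sub_sum M Y, if_pos hY]
    ring
  · have hfilter : Finset.univ.filter (fun Z : Finset α => CyclicFlat M ↑Z ∧ Z ⊆ Y) =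
        Finset.univ.filter (fun Z : Finset α => CyclicFlat M ↑Z ∧ Z ⊂ Y) :=
      Finset.filter_congr fun Z _ ↦ and_congr_right fun hZ ↦
        ⟨fun hZY ↦ ssubset_of_subset_of_ne hZY (by rintro rfl; exact hY hZ), subset_of_ssubset⟩
    rw [hfilter, gamma_eq_nullity_sub_sum M Y, if_neg hY]
    ring

theorem statement_3 (M : Matroid α) (X : Finset α) (hX : ↑X ⊆ M.E)
    (hnc : ¬ Cyclic M ↑X) (L : Finset α) (hL : ↑L = coloops (M ↾ (↑X : Set α))) :
    (¬ CyclicFlat M ↑(X \ L) → gamma M X = gamma M (X \ L)) ∧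
    (CyclicFlat M ↑(X \ L) → gamma M X = 0) := by
  have hL' : (↑L : Set α) = (M ↾ ↑X).coloops := hL.trans (coloops_eq_coloops _)
  have hK : (M ↾ ↑X).coloops.Nonempty := coloops_restrict_nonempty_of_not_cyclic hX hnc
  have hfilter : Finset.univ.filter (fun Z : Finset α => CyclicFlat M ↑Z ∧ Z ⊂ X) =
      Finset.univ.filter (fun Z : Finset α => CyclicFlat M ↑Z ∧ Z ⊆ X \ L) :=
    Finset.filter_congr fun Z _ ↦ and_congr_right fun hZ ↦ by
      rw [← Finset.coe_ssubset, ← Finset.coe_subset, Finset.coe_sdiff, hL']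
      exact ssubset_iff_subset_sdiff_coloops_restrict hK hZ.1
  have hnull : nullity M ↑(X \ L) = nullity M ↑X := by
    rw [Finset.coe_sdiff, hL']
    exact nullity_sdiff_coloops_restrict X.finite_toSet
  have key : gamma M X =
      gamma M (X \ L) - if CyclicFlat M ↑(X \ L) then gamma M (X \ L) else 0 := by
    rw [gamma_eq_nullity_sub_sum, hfilter, sum_gamma_cyclicFlat_subset, hnull]
    ring
  exact ⟨fun h ↦ by rw [key, if_neg h, sub_zero], fun h ↦ by rw [key, if_pos h, sub_self]⟩

end Paper
end

section
/- For all cyclic flats Z0 and Z1 of M⁺: cl_M((Z0 − e) ∪ (Z1 − e)) = cl_{M⁺}(Z0 ∪ Z1) − e. -/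
/-! Closure in `M \ e` is closure in `M` with `e` removed, and the union `Z0 ∪ Z1` is cyclic.
Removing `e` from a cyclic set does not change its closure, because `e` is spanned by the rest
of a circuit through it. -/

open Set Matroid
open scoped Classical

namespace Paper

variable {α : Type*}

lemma Circuit.mem_closure_sdiff_singleton {M : Matroid α} {C : Set α} {e : α}
    (hC : Circuit M C) (heC : e ∈ C) : e ∈ M.closure (C \ {e}) := by
  have hind : M.Indep (C \ {e}) := hC.2 _ (sdiff_singleton_ssubset.mpr heC)
  rw [hind.mem_closure_iff, insert_sdiff_singleton, insert_eq_of_mem heC]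
  exact Or.inl hC.1

lemma Cyclic.union {M : Matroid α} {X Y : Set α} (hX : Cyclic M X) (hY : Cyclic M Y) :
    Cyclic M (X ∪ Y) := by
  refine ⟨union_subset hX.1 hY.1, ?_⟩
  rintro x (hx | hx)
  · obtain ⟨C, hC, hCX, hxC⟩ := hX.2 x hx
    exact ⟨C, hC, hCX.trans subset_union_left, hxC⟩
  · obtain ⟨C, hC, hCY, hxC⟩ := hY.2 x hx
    exact ⟨C, hC, hCY.trans subset_union_right, hxC⟩

lemma Cyclic.closure_sdiff_singleton {M : Matroid α} {X : Set α} (hX : Cyclic M X) (e : α) :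
    M.closure (X \ {e}) = M.closure X := by
  by_cases heX : e ∈ X
  · obtain ⟨C, hC, hCX, heC⟩ := hX.2 e heX
    exact closure_sdiff_singleton_eq_closure <|
      M.closure_subset_closure (sdiff_subset_sdiff_left hCX) (hC.mem_closure_sdiff_singleton heC)
  · rw [sdiff_singleton_eq_self heX]

theorem statement_7_general (M : Matroid α) (e : α)
    (Z0 Z1 : Set α) (h0 : CyclicFlat M Z0) (h1 : CyclicFlat M Z1) :
    (deleteElem M e).closure ((Z0 \ {e}) ∪ (Z1 \ {e})) = M.closure (Z0 ∪ Z1) \ {e} := by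
  rw [deleteElem, ← delete_eq_restrict, delete_closure_eq, ← union_sdiff_distrib, sdiff_idem,
    (h0.1.union h1.1).closure_sdiff_singleton e]

theorem statement_7 (M : Matroid α) (hfin : M.E.Finite) (e : α) (he : e ∈ M.E)
    (Z0 Z1 : Set α) (h0 : CyclicFlat M Z0) (h1 : CyclicFlat M Z1) :
    (deleteElem M e).closure ((Z0 \ {e}) ∪ (Z1 \ {e})) = M.closure (Z0 ∪ Z1) \ {e} :=
  statement_7_general M e Z0 Z1 h0 h1

end Paper
end

section
/- Let X ⊆ E(M⁺) be a flat of M⁺ with e ∉ X. Then γ_{M⁺}(X) = γ_M(X). -/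
/-!
Deleting `e` is restricting to `R = E − e`. If `X` is a flat avoiding `e`, then every `Z ⊆ X` has
`cl Z ⊆ X ⊆ R`, and restricting to a set containing `cl Z` changes neither the rank, nor the
circuits inside `Z`, nor the closure of `Z`. Hence the nullity of `X` and the cyclic flats below
`X` are the same in both matroids, and the recursion defining `γ` runs identically.
-/

open Set Matroid
open scoped Classical

namespace Paper

variable {α : Type*}

lemma rk_restrict_of_subset (M : Matroid α) {R Z : Set α} (hZR : Z ⊆ R) :
    rk (M ↾ R) Z = rk M Z := by
  unfold rk
  congr 2
  ext I
  simp only [mem_ofPred_eq, restrict_indep_iff]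
  exact ⟨fun h ↦ ⟨h.1.1, h.2⟩, fun h ↦ ⟨⟨h.1, h.2.trans hZR⟩, h.2⟩⟩

lemma nullity_restrict_of_subset (M : Matroid α) {R Z : Set α} (hZR : Z ⊆ R) :
    nullity (M ↾ R) Z = nullity M Z := by
  rw [nullity, nullity, rk_restrict_of_subset M hZR]

lemma circuit_restrict_iff {M : Matroid α} {R C : Set α} (hR : R ⊆ M.E) :
    Circuit (M ↾ R) C ↔ Circuit M C ∧ C ⊆ R := by
  simp only [Circuit, restrict_dep_iff, restrict_indep_iff]
  rw [Matroid.dep_iff]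
  exact ⟨fun ⟨⟨hC, hCR⟩, hmin⟩ ↦ ⟨⟨⟨hC, hCR.trans hR⟩, fun D hD ↦ (hmin D hD).1⟩, hCR⟩,
    fun ⟨⟨⟨hC, _⟩, hmin⟩, hCR⟩ ↦ ⟨⟨hC, hCR⟩, fun D hD ↦ ⟨hmin D hD, hD.subset.trans hCR⟩⟩⟩

lemma cyclic_restrict_iff {M : Matroid α} {R Z : Set α} (hR : R ⊆ M.E) (hZR : Z ⊆ R) :
    Cyclic (M ↾ R) Z ↔ Cyclic M Z := by
  have hcirc : ∀ C ⊆ Z, Circuit (M ↾ R) C ↔ Circuit M C := fun C hCZ ↦ by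
    rw [circuit_restrict_iff hR, and_iff_left (hCZ.trans hZR)]
  simp only [Cyclic, restrict_ground_eq, hZR, hZR.trans hR, true_and]
  exact forall₂_congr fun _ _ ↦ exists_congr fun C ↦ and_congr_left fun h ↦ hcirc C h.1

lemma isFlat_restrict_iff_of_closure_subset {M : Matroid α} {R Z : Set α} (hR : R ⊆ M.E)
    (hZ : Z ⊆ M.E) (hclZ : M.closure Z ⊆ R) :
    (M ↾ R).IsFlat Z ↔ M.IsFlat Z := by
  have hZR : Z ⊆ R := (M.subset_closure Z hZ).trans hclZ
  rw [isFlat_iff_closure_eq, isFlat_iff_closure_eq, M.restrict_closure_eq hZR hR,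
    inter_eq_left.mpr hclZ]

lemma cyclicFlat_restrict_iff_of_closure_subset {M : Matroid α} {R Z : Set α} (hR : R ⊆ M.E)
    (hZ : Z ⊆ M.E) (hclZ : M.closure Z ⊆ R) :
    CyclicFlat (M ↾ R) Z ↔ CyclicFlat M Z := by
  rw [CyclicFlat, CyclicFlat, cyclic_restrict_iff hR ((M.subset_closure Z hZ).trans hclZ),
    isFlat_restrict_iff_of_closure_subset hR hZ hclZ]

variable [Fintype α] [DecidableEq α]

theorem gamma_restrict_of_isFlat {M : Matroid α} {R : Set α} (hR : R ⊆ M.E) {X : Finset α}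
    (hX : M.IsFlat ↑X) (hXR : ↑X ⊆ R) :
    gamma (M ↾ R) X = gamma M X := by
  induction X using Finset.strongInduction with
  | H X ih =>
    have hcyclicFlats : ∀ Z ⊂ X, CyclicFlat (M ↾ R) ↑Z ↔ CyclicFlat M ↑Z := fun Z hZssubX ↦
      have hZX : (↑Z : Set α) ⊆ ↑X := Finset.coe_subset.mpr hZssubX.subset
      cyclicFlat_restrict_iff_of_closure_subset hR (hZX.trans hX.subset_ground)
        ((M.closure_subset_closure hZX).trans (hX.closure.trans_subset hXR))
    rw [gamma, gamma, nullity_restrict_of_subset M hXR, Finset.sum_attach _ (gamma (M ↾ R)),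
      Finset.sum_attach _ (gamma M),
      Finset.filter_congr fun Z _ ↦ and_congr_left fun hZX ↦ hcyclicFlats Z hZX]
    refine congrArg _ (Finset.sum_congr rfl fun Z hZ ↦ ?_)
    obtain ⟨hZ, hZX⟩ := (Finset.mem_filter.mp hZ).2
    exact ih Z hZX hZ.2 ((Finset.coe_subset.mpr hZX.subset).trans hXR)

theorem statement_12_general (M : Matroid α) (e : α)
    (X : Finset α) (hflat : M.IsFlat ↑X) (heX : e ∉ X) :
    gamma M X = gamma (deleteElem M e) X :=
  (gamma_restrict_of_isFlat sdiff_subset hflat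
    (subset_sdiff_singleton hflat.subset_ground (Finset.mem_coe.not.mpr heX))).symm

theorem statement_12 (M : Matroid α) (e : α) (he : e ∈ M.E)
    (X : Finset α) (hflat : M.IsFlat ↑X) (heX : e ∉ X) :
    gamma M X = gamma (deleteElem M e) X :=
  statement_12_general M e X hflat heX

end Paper
end
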